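/- arXiv:1808.00505 — 6 statements merged into one kernel-verified Lean document; each statement's English description precedes it below -/
import Mathlib

section
/- Let M be a proper metric space, N a finite index type with at least one element, f ∈ M^N, p ≥ 1, and R : M^N → ℝ lower semicontinuous and nonnegative. Then the denoising functional F(u) = Σ_{i} dist(u_i, f_i)^p + R(u) attains its minimum on M^N. -/
/-- A lower semicontinuous real function attains its minimum on a nonempty compact set. -/
lemma lsc_exists_min {X : Type*} [TopologicalSpace X] {K : Set X} (hK : IsCompact K)
    (hne : K.Nonempty) {F : X → ℝ} (hF : LowerSemicontinuous F) :
    ∃ x ∈ K, ∀ y ∈ K, F x ≤ F y := by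
  by_contra h
  push_neg at h
  have cover : K ⊆ ⋃ y ∈ K, F ⁻¹' Set.Ioi (F y) := by
    intro x hx
    obtain ⟨y, hy, hlt⟩ := h x hx
    exact Set.mem_biUnion hy hlt
  obtain ⟨b, hbK, hbfin, hbc⟩ := hK.elim_finite_subcover_image
    (fun y _ => hF.isOpen_preimage (F y)) cover
  obtain ⟨x0, hx0⟩ := hne
  have hbne : b.Nonempty := by
    rcases Set.mem_iUnion₂.1 (hbc hx0) with ⟨y, hy, _⟩
    exact ⟨y, hy⟩
  obtain ⟨z, hz, hzmin⟩ := Set.Finite.exists_minimalFor F b hbfin hbne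
  rcases Set.mem_iUnion₂.1 (hbc (hbK hz)) with ⟨y, hy, hlt⟩
  have : F z ≤ F y := by
    by_contra hcon
    push_neg at hcon
    exact absurd (hzmin hy hcon.le) (not_le.2 hcon)
  exact absurd hlt (by simp; linarith)

theorem stmt_5 {M : Type*} [MetricSpace M] [ProperSpace M]
    {N : Type*} [Fintype N] [Nonempty N]
    (f : N → M) (p : ℝ) (hp : 1 ≤ p)
    (R : (N → M) → ℝ) (hR : LowerSemicontinuous R) (hR0 : ∀ u, 0 ≤ R u) :
    ∃ u : N → M, ∀ v : N → M,
      (∑ i : N, dist (u i) (f i) ^ p) + R u ≤ (∑ i : N, dist (v i) (f i) ^ p) + R v := by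
  have hp0 : (0:ℝ) ≤ p := le_trans zero_le_one hp
  set C : ℝ := R f + 1 with hC
  have hC1 : (1:ℝ) ≤ C := by have := hR0 f; simp [hC]; linarith
  set F : (N → M) → ℝ := fun u => (∑ i : N, dist (u i) (f i) ^ p) + R u with hF
  have hcont : Continuous fun u : N → M => ∑ i : N, dist (u i) (f i) ^ p := by
    apply continuous_finset_sum
    intro i _
    exact (Real.continuous_rpow_const hp0).comp ((continuous_apply i).dist continuous_const)
  have hFlsc : LowerSemicontinuous F := hcont.lowerSemicontinuous.add hR
  set K : Set (N → M) := Set.univ.pi fun i => Metric.closedBall (f i) C with hK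
  have hKc : IsCompact K := isCompact_univ_pi fun i => isCompact_closedBall _ _
  have hfK : f ∈ K := by
    intro i _
    simp [Metric.mem_closedBall]
    linarith
  obtain ⟨u, huK, humin⟩ := lsc_exists_min hKc ⟨f, hfK⟩ hFlsc
  have hFf : F f = R f := by
    simp [hF, Real.zero_rpow (by linarith : p ≠ 0)]
  have huf : F u ≤ R f := hFf ▸ humin f hfK
  refine ⟨u, fun v => ?_⟩
  by_cases hv : v ∈ K
  · exact humin v hv
  · -- some coordinate is far
    have : ∃ i, C < dist (v i) (f i) := by
      by_contra hcon
      push_neg at hcon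
      exact hv fun i _ => Metric.mem_closedBall.2 (hcon i)
    obtain ⟨i, hi⟩ := this
    have h1 : C ^ p ≤ dist (v i) (f i) ^ p :=
      Real.rpow_le_rpow (by linarith) hi.le hp0
    have h2 : C ≤ C ^ p := by
      have := Real.rpow_le_rpow_of_exponent_le hC1 hp
      rwa [Real.rpow_one] at this
    have h3 : dist (v i) (f i) ^ p ≤ ∑ j : N, dist (v j) (f j) ^ p :=
      Finset.single_le_sum (fun j _ => Real.rpow_nonneg dist_nonneg p) (Finset.mem_univ i)
    have := hR0 v
    show F u ≤ _
    calc F u ≤ R f := huf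
      _ ≤ (∑ j : N, dist (v j) (f j) ^ p) + R v := by simp [hC] at h2 ⊢; linarith
end

section
/- Let H be a real Hilbert space, a, b ∈ H, λ > 0 and μ > 0. Consider the joint proximal problem minimizing (x, y) ↦ λ‖x − y‖ + (1/(2μ))(‖x − a‖² + ‖y − b‖²). The minimizer is given by (x*, y*) = (a + t·(b−a)/‖b−a‖, b + t·(a−b)/‖b−a‖) with t = min(λμ, ‖a − b‖/2) when a ≠ b, and (a, b) when a = b. -/
private lemma para_aux {H : Type*} [NormedAddCommGroup H] [InnerProductSpace ℝ H]
    (c d : H) :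
    ‖(1/2 : ℝ) • (c + d)‖ ^ 2 = (‖c‖ ^ 2 + ‖d‖ ^ 2) / 2 - ‖c - d‖ ^ 2 / 4 := by
  have h := parallelogram_law_with_norm ℝ c d
  rw [norm_smul, Real.norm_eq_abs, abs_of_nonneg (by norm_num : (0:ℝ) ≤ 1/2)]
  linear_combination h / 4

private lemma key_ineq (μ lam r s q N t : ℝ) (hμ : 0 < μ) (hlam : 0 < lam)
    (hr0 : 0 ≤ r) (hs : 0 ≤ s) (hq : 0 ≤ q) (hN0 : 0 ≤ N) (hN1 : r ≤ s + N + q)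
    (ht : t = min (lam * μ) (r / 2)) :
    2 * μ * (lam * (r - 2 * t)) + (t ^ 2 + t ^ 2) ≤
      2 * μ * (lam * N) + (s ^ 2 + q ^ 2) := by
  have hNlb : r - s - q ≤ N := by linarith
  rcases le_total (lam * μ) (r / 2) with h | h
  · have ht1 : t = lam * μ := by rw [ht]; exact min_eq_left h
    subst ht1
    have key : 2 * μ * lam * (r - s - q) ≤ 2 * μ * lam * N :=
      mul_le_mul_of_nonneg_left hNlb (by positivity)
    nlinarith [sq_nonneg (s - lam * μ), sq_nonneg (q - lam * μ), key]
  · have ht1 : t = r / 2 := by rw [ht]; exact min_eq_right h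
    subst ht1
    rcases le_total r (s + q) with h2 | h2
    · nlinarith [sq_nonneg (s - q), mul_nonneg (mul_nonneg (by linarith : (0:ℝ) ≤ 2 * μ) hlam.le) hN0]
    · have k1 : 0 ≤ (2 * μ * lam - r) * N :=
        mul_nonneg (by linarith) hN0
      have k2 : 0 ≤ r * (N - (r - s - q)) :=
        mul_nonneg hr0 (by linarith)
      nlinarith [sq_nonneg (r - s - q), sq_nonneg (s - q), k1, k2]

theorem stmt_10 {H : Type*} [NormedAddCommGroup H] [InnerProductSpace ℝ H] [CompleteSpace H]
    (a b : H) (lam μ : ℝ) (hlam : 0 < lam) (hμ : 0 < μ)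
    (F : H × H → ℝ)
    (hF : ∀ p : H × H,
      F p = lam * ‖p.1 - p.2‖ + (1 / (2 * μ)) * (‖p.1 - a‖ ^ 2 + ‖p.2 - b‖ ^ 2))
    (pstar : H × H)
    (hstar : (a = b → pstar = (a, b)) ∧
      (a ≠ b → pstar =
        (a + (min (lam * μ) (‖a - b‖ / 2) / ‖b - a‖) • (b - a),
         b + (min (lam * μ) (‖a - b‖ / 2) / ‖b - a‖) • (a - b)))) :
    (∀ p : H × H, F pstar ≤ F p) ∧
    (∀ p : H × H, (∀ q : H × H, F p ≤ F q) → p = pstar) := by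
  have h2μ : (0:ℝ) < 2 * μ := by linarith
  have hmono : ∀ A B C D : ℝ, 2 * μ * A + C ≤ 2 * μ * B + D →
      A + 1 / (2 * μ) * C ≤ B + 1 / (2 * μ) * D := by
    intro A B C D h
    have h1 : A + 1 / (2 * μ) * C = (2 * μ * A + C) / (2 * μ) := by
      field_simp
    have h2 : B + 1 / (2 * μ) * D = (2 * μ * B + D) / (2 * μ) := by
      field_simp
    rw [h1, h2]
    gcongr
  have hmin : ∀ p : H × H, F pstar ≤ F p := by
    intro p
    rcases eq_or_ne a b with hab | hab
    · have hps : pstar = (a, b) := hstar.1 hab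
      rw [hps, hF, hF]
      subst hab
      simp only [sub_self, norm_zero]
      norm_num
      positivity
    · have hps := hstar.2 hab
      set r : ℝ := ‖b - a‖ with hr
      have hr' : ‖a - b‖ = r := norm_sub_rev a b
      have hrpos : 0 < r := by
        rw [hr]; exact norm_sub_pos_iff.mpr (Ne.symm hab)
      set t : ℝ := min (lam * μ) (‖a - b‖ / 2) with ht
      have ht' : t = min (lam * μ) (r / 2) := by rw [ht, hr']
      have ht0 : 0 ≤ t := le_min (by positivity) (by positivity)
      have htr : t ≤ r / 2 := by rw [ht']; exact min_le_right _ _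
      have hx : pstar.1 - a = (t / r) • (b - a) := by
        rw [hps]; simp
      have hy : pstar.2 - b = (t / r) • (a - b) := by
        rw [hps]; simp
      have hxy : pstar.1 - pstar.2 = (1 - 2 * (t / r)) • (a - b) := by
        rw [hps]
        show (a + (t / r) • (b - a)) - (b + (t / r) • (a - b)) = _
        module
      have hnx : ‖pstar.1 - a‖ = t := by
        rw [hx, norm_smul, Real.norm_eq_abs, abs_of_nonneg (by positivity), ← hr]
        field_simp
      have hny : ‖pstar.2 - b‖ = t := by
        rw [hy, norm_smul, Real.norm_eq_abs, abs_of_nonneg (by positivity), hr']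
        field_simp
      have hnxy : ‖pstar.1 - pstar.2‖ = r - 2 * t := by
        rw [hxy, norm_smul, Real.norm_eq_abs, hr']
        have h1 : 0 ≤ 1 - 2 * (t / r) := by
          have h2 : t / r ≤ 1 / 2 := by
            rw [div_le_div_iff₀ hrpos two_pos]; linarith
          linarith
        rw [abs_of_nonneg h1]
        field_simp
      rw [hF, hF, hnxy, hnx, hny]
      have hs : (0:ℝ) ≤ ‖p.1 - a‖ := norm_nonneg _
      have hq : (0:ℝ) ≤ ‖p.2 - b‖ := norm_nonneg _
      have hN0 : (0:ℝ) ≤ ‖p.1 - p.2‖ := norm_nonneg _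
      set s := ‖p.1 - a‖
      set q := ‖p.2 - b‖
      set N := ‖p.1 - p.2‖
      have hN1 : r ≤ s + N + q := by
        calc r = dist a b := by rw [dist_eq_norm, hr']
        _ ≤ dist a p.1 + dist p.1 p.2 + dist p.2 b := dist_triangle4 _ _ _ _
        _ = s + N + q := by
            rw [dist_eq_norm, dist_eq_norm, dist_eq_norm, norm_sub_rev a p.1]
      exact hmono _ _ _ _ (key_ineq μ lam r s q N t hμ hlam hrpos.le hs hq hN0 hN1 ht')
  refine ⟨hmin, ?_⟩
  intro p hp
  have h1 : F p = F pstar := le_antisymm (hp pstar) (hmin p)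
  set m : H × H := ((1/2 : ℝ) • (p.1 + pstar.1), (1/2 : ℝ) • (p.2 + pstar.2)) with hm
  have hm1 : m.1 - a = (1/2 : ℝ) • ((p.1 - a) + (pstar.1 - a)) := by
    show (1/2 : ℝ) • (p.1 + pstar.1) - a = _; module
  have hm2 : m.2 - b = (1/2 : ℝ) • ((p.2 - b) + (pstar.2 - b)) := by
    show (1/2 : ℝ) • (p.2 + pstar.2) - b = _; module
  have hm3 : m.1 - m.2 = (1/2 : ℝ) • ((p.1 - p.2) + (pstar.1 - pstar.2)) := by
    show (1/2 : ℝ) • (p.1 + pstar.1) - (1/2 : ℝ) • (p.2 + pstar.2) = _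
    module
  have e1 : ‖m.1 - a‖ ^ 2 = (‖p.1 - a‖ ^ 2 + ‖pstar.1 - a‖ ^ 2) / 2
      - ‖(p.1 - a) - (pstar.1 - a)‖ ^ 2 / 4 := by
    rw [hm1, para_aux]
  have e2 : ‖m.2 - b‖ ^ 2 = (‖p.2 - b‖ ^ 2 + ‖pstar.2 - b‖ ^ 2) / 2
      - ‖(p.2 - b) - (pstar.2 - b)‖ ^ 2 / 4 := by
    rw [hm2, para_aux]
  have e3 : ‖m.1 - m.2‖ ≤ (‖p.1 - p.2‖ + ‖pstar.1 - pstar.2‖) / 2 := by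
    rw [hm3, norm_smul, Real.norm_eq_abs,
      abs_of_nonneg (by norm_num : (0:ℝ) ≤ 1/2)]
    have := norm_add_le (p.1 - p.2) (pstar.1 - pstar.2)
    linarith
  have hd1 : (p.1 - a) - (pstar.1 - a) = p.1 - pstar.1 := by abel
  have hd2 : (p.2 - b) - (pstar.2 - b) = p.2 - pstar.2 := by abel
  rw [hd1] at e1
  rw [hd2] at e2
  have hpos : (0:ℝ) < 1 / (2 * μ) := by positivity
  have hFm : F m ≤ (F p + F pstar) / 2
      - 1 / (2 * μ) * ((‖p.1 - pstar.1‖ ^ 2 + ‖p.2 - pstar.2‖ ^ 2) / 4) := by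
    rw [hF m, hF p, hF pstar, e1, e2]
    have hlam' : lam * ‖m.1 - m.2‖ ≤ lam * ((‖p.1 - p.2‖ + ‖pstar.1 - pstar.2‖) / 2) :=
      mul_le_mul_of_nonneg_left e3 hlam.le
    nlinarith [hlam', hpos]
  have h2 : F p ≤ F m := hp m
  have h7 : 1 / (2 * μ) * ((‖p.1 - pstar.1‖ ^ 2 + ‖p.2 - pstar.2‖ ^ 2) / 4)
      ≤ 1 / (2 * μ) * 0 := by
    rw [mul_zero]; linarith [hFm, h2, h1]
  have h8 := le_of_mul_le_mul_left h7 hpos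
  have hx0 : ‖p.1 - pstar.1‖ ^ 2 = 0 :=
    le_antisymm (by linarith [sq_nonneg ‖p.2 - pstar.2‖]) (sq_nonneg _)
  have hy0 : ‖p.2 - pstar.2‖ ^ 2 = 0 :=
    le_antisymm (by linarith [sq_nonneg ‖p.1 - pstar.1‖]) (sq_nonneg _)
  have hz1 : p.1 = pstar.1 :=
    sub_eq_zero.mp (norm_eq_zero.mp (pow_eq_zero_iff two_ne_zero |>.mp hx0))
  have hz2 : p.2 = pstar.2 :=
    sub_eq_zero.mp (norm_eq_zero.mp (pow_eq_zero_iff two_ne_zero |>.mp hy0))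
  exact Prod.ext hz1 hz2
end

section
/- Let H be a real Hilbert space, a, b ∈ H, λ > 0 and μ > 0. Consider minimizing F(x, y) = λ·[x ≠ y] + (1/(2μ))(‖x − a‖² + ‖y − b‖²), where [x ≠ y] = 1 if x ≠ y and 0 otherwise. If ‖a − b‖ > 2√(μλ) then (a, b) is a minimizer with value λ; if ‖a − b‖ < 2√(μλ) then (m, m) with m = (a+b)/2 is the unique minimizer with value ‖a − b‖²/(4μ); if ‖a − b‖ = 2√(μλ) both are minimizers. -/
open Classical in
theorem stmt_11 {H : Type*} [NormedAddCommGroup H] [InnerProductSpace ℝ H] [CompleteSpace H]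
    (a b : H) (lam μ : ℝ) (hlam : 0 < lam) (hμ : 0 < μ)
    (F : H × H → ℝ)
    (hF : ∀ p : H × H,
      F p = lam * (if p.1 = p.2 then (0 : ℝ) else 1) +
        (1 / (2 * μ)) * (‖p.1 - a‖ ^ 2 + ‖p.2 - b‖ ^ 2)) :
    (‖a - b‖ > 2 * Real.sqrt (μ * lam) →
      (∀ p : H × H, F (a, b) ≤ F p) ∧ F (a, b) = lam) ∧
    (‖a - b‖ < 2 * Real.sqrt (μ * lam) →
      (∀ p : H × H, F (midpoint ℝ a b, midpoint ℝ a b) ≤ F p) ∧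
      F (midpoint ℝ a b, midpoint ℝ a b) = ‖a - b‖ ^ 2 / (4 * μ) ∧
      (∀ p : H × H, (∀ q : H × H, F p ≤ F q) →
        p = (midpoint ℝ a b, midpoint ℝ a b))) ∧
    (‖a - b‖ = 2 * Real.sqrt (μ * lam) →
      (∀ p : H × H, F (a, b) ≤ F p) ∧
      (∀ p : H × H, F (midpoint ℝ a b, midpoint ℝ a b) ≤ F p)) := by
  set m := midpoint ℝ a b with hmdef
  have hm2 : m + m = a + b := midpoint_add_self ℝ a b
  have hpar : ∀ x : H, ‖x - a‖ ^ 2 + ‖x - b‖ ^ 2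
      = 2 * ‖x - m‖ ^ 2 + ‖a - b‖ ^ 2 / 2 := by
    intro x
    have hp := parallelogram_law_with_norm ℝ (x - a) (x - b)
    have h1 : (x - a) + (x - b) = (2 : ℝ) • (x - m) := by
      rw [two_smul, sub_add_sub_comm, sub_add_sub_comm, hm2]
    have h2 : (x - a) - (x - b) = b - a := by abel
    rw [h1, h2, norm_smul, norm_sub_rev b a] at hp
    simp only [Real.norm_ofNat] at hp
    nlinarith [hp]
  have hFdiag : ∀ x : H, F (x, x) = ‖a - b‖ ^ 2 / (4 * μ) + (1 / μ) * ‖x - m‖ ^ 2 := by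
    intro x
    have hx : F (x, x) = lam * 0 + (1 / (2 * μ)) * (‖x - a‖ ^ 2 + ‖x - b‖ ^ 2) := by
      rw [hF (x, x)]
      norm_num
    rw [hx, hpar x]
    field_simp
    ring
  have hFmm : F (m, m) = ‖a - b‖ ^ 2 / (4 * μ) := by
    rw [hFdiag m]
    simp
  have hFoff : ∀ p : H × H, p.1 ≠ p.2 → lam ≤ F p := by
    intro p hp
    rw [hF p, if_neg hp]
    have h0 : 0 ≤ (1 / (2 * μ)) * (‖p.1 - a‖ ^ 2 + ‖p.2 - b‖ ^ 2) := by positivity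
    linarith
  have hFdiag_ge : ∀ p : H × H, p.1 = p.2 → ‖a - b‖ ^ 2 / (4 * μ) ≤ F p := by
    intro p hp
    have h1 : F p = F (p.1, p.1) := congrArg F (Prod.ext rfl hp.symm)
    rw [h1, hFdiag p.1]
    have h0 : 0 ≤ (1 / μ) * ‖p.1 - m‖ ^ 2 := by positivity
    linarith
  have hsq : (2 * Real.sqrt (μ * lam)) ^ 2 = 4 * (μ * lam) := by
    rw [mul_pow, Real.sq_sqrt (by positivity)]
    ring
  have hFab : a ≠ b → F (a, b) = lam := by
    intro hne
    rw [hF (a, b)]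
    simp [hne]
  refine ⟨?_, ?_, ?_⟩
  · intro h
    have hpos : 0 < 2 * Real.sqrt (μ * lam) := by positivity
    have hne : a ≠ b := by
      intro hab
      rw [hab, sub_self, norm_zero] at h
      linarith
    have hgt : 4 * (μ * lam) < ‖a - b‖ ^ 2 := by nlinarith
    refine ⟨fun p => ?_, hFab hne⟩
    rw [hFab hne]
    by_cases hp : p.1 = p.2
    · have h1 := hFdiag_ge p hp
      have : lam < ‖a - b‖ ^ 2 / (4 * μ) := by
        rw [lt_div_iff₀ (by linarith)]
        nlinarith
      linarith
    · exact hFoff p hp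
  · intro h
    have hlt : ‖a - b‖ ^ 2 < 4 * (μ * lam) := by
      nlinarith [norm_nonneg (a - b), Real.sqrt_nonneg (μ * lam)]
    have hlam' : ‖a - b‖ ^ 2 / (4 * μ) < lam := by
      rw [div_lt_iff₀ (by linarith)]
      nlinarith
    have hmin : ∀ p : H × H, F (m, m) ≤ F p := by
      intro p
      rw [hFmm]
      by_cases hp : p.1 = p.2
      · exact hFdiag_ge p hp
      · linarith [hFoff p hp]
    refine ⟨hmin, hFmm, fun p hminp => ?_⟩
    have hple : F p ≤ ‖a - b‖ ^ 2 / (4 * μ) := by rw [← hFmm]; exact hminp (m, m)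
    have hp : p.1 = p.2 := by
      by_contra hne
      linarith [hFoff p hne]
    have hFp : F p = ‖a - b‖ ^ 2 / (4 * μ) + (1 / μ) * ‖p.1 - m‖ ^ 2 := by
      have h1 : F p = F (p.1, p.1) := congrArg F (Prod.ext rfl hp.symm)
      rw [h1, hFdiag p.1]
    have hxm : ‖p.1 - m‖ ^ 2 ≤ 0 := by
      rw [hFp] at hple
      have h1μ : 0 < 1 / μ := by positivity
      nlinarith
    have hx : p.1 = m := by
      have : ‖p.1 - m‖ ^ 2 = 0 := le_antisymm hxm (by positivity)
      have h0 : ‖p.1 - m‖ = 0 := by nlinarith [norm_nonneg (p.1 - m)]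
      rw [norm_eq_zero, sub_eq_zero] at h0
      exact h0
    exact Prod.ext hx (by rw [← hp, hx])
  · intro h
    have hpos : 0 < 2 * Real.sqrt (μ * lam) := by positivity
    have hne : a ≠ b := by
      intro hab
      rw [hab, sub_self, norm_zero] at h
      linarith
    have heq : ‖a - b‖ ^ 2 = 4 * (μ * lam) := by rw [h, hsq]
    have hlameq : ‖a - b‖ ^ 2 / (4 * μ) = lam := by
      rw [heq]; field_simp
    constructor
    · intro p
      rw [hFab hne]
      by_cases hp : p.1 = p.2
      · linarith [hFdiag_ge p hp, hlameq.ge]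
      · exact hFoff p hp
    · intro p
      rw [hFmm]
      by_cases hp : p.1 = p.2
      · exact hFdiag_ge p hp
      · linarith [hFoff p hp, hlameq.le]
end

section
/- Let M be a proper metric space, K ∈ ℕ, w : Fin K → ℝ strictly positive weights, and x^(l) : Fin K → M a sequence of tuples converging to x in M^K. Suppose for each l, m^(l) ∈ M is a minimizer of v ↦ Σ_j w_j dist(v, x^(l)_j)². Then the sequence (m^(l)) is bounded, and every limit point m of (m^(l)) is a minimizer of v ↦ Σ_j w_j dist(v, x_j)². -/
open Filter

theorem stmt_13 {M : Type*} [MetricSpace M] [ProperSpace M]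
    {K : ℕ} (hK : 0 < K) (w : Fin K → ℝ) (hw : ∀ j, 0 < w j)
    (xl : ℕ → Fin K → M) (x : Fin K → M)
    (hconv : Tendsto xl atTop (nhds x))
    (m : ℕ → M)
    (hm : ∀ l, ∀ v : M,
      ∑ j, w j * dist (m l) (xl l j) ^ 2 ≤ ∑ j, w j * dist v (xl l j) ^ 2) :
    Bornology.IsBounded (Set.range m) ∧
    ∀ (m₀ : M) (φ : ℕ → ℕ), StrictMono φ → Tendsto (m ∘ φ) atTop (nhds m₀) →
      ∀ v : M, ∑ j, w j * dist m₀ (x j) ^ 2 ≤ ∑ j, w j * dist v (x j) ^ 2 := by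
  set j0 : Fin K := ⟨0, hK⟩ with hj0
  -- coordinate convergence
  have hcoord : ∀ j : Fin K, Tendsto (fun l => xl l j) atTop (nhds (x j)) := by
    intro j
    exact ((continuous_apply j).continuousAt.tendsto).comp hconv
  -- uniform bound on dist (xl l j) (x j)
  have hdist0 : Tendsto (fun l => dist (xl l) x) atTop (nhds 0) :=
    tendsto_iff_dist_tendsto_zero.mp hconv
  obtain ⟨C, hC⟩ := hdist0.bddAbove_range
  have hC' : ∀ l (j : Fin K), dist (xl l j) (x j) ≤ C := by
    intro l j
    exact le_trans (dist_le_pi_dist (xl l) x j) (hC ⟨l, rfl⟩)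
  have hC0 : (0 : ℝ) ≤ C := le_trans dist_nonneg (hC' 0 j0)
  set E : ℝ := ∑ j, w j * (2 * C + dist (x j0) (x j)) ^ 2 with hE
  have hEbound : ∀ l, ∑ j, w j * dist (xl l j0) (xl l j) ^ 2 ≤ E := by
    intro l
    apply Finset.sum_le_sum
    intro j _
    apply mul_le_mul_of_nonneg_left _ (hw j).le
    have h1 : dist (xl l j0) (xl l j) ≤ 2 * C + dist (x j0) (x j) := by
      calc dist (xl l j0) (xl l j)
          ≤ dist (xl l j0) (x j0) + dist (x j0) (x j) + dist (x j) (xl l j) :=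
            dist_triangle4 _ _ _ _
        _ ≤ C + dist (x j0) (x j) + C := by
            have := hC' l j0
            have h2 := hC' l j
            rw [dist_comm (x j)] at *
            linarith
        _ = 2 * C + dist (x j0) (x j) := by ring
    exact pow_le_pow_left₀ dist_nonneg h1 2
  have hkey : ∀ l, w j0 * dist (m l) (xl l j0) ^ 2 ≤ E := by
    intro l
    calc w j0 * dist (m l) (xl l j0) ^ 2
        ≤ ∑ j, w j * dist (m l) (xl l j) ^ 2 :=
          Finset.single_le_sum (f := fun j => w j * dist (m l) (xl l j) ^ 2)
            (fun j _ => mul_nonneg (hw j).le (sq_nonneg _))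
            (Finset.mem_univ j0)
      _ ≤ ∑ j, w j * dist (xl l j0) (xl l j) ^ 2 := hm l (xl l j0)
      _ ≤ E := hEbound l
  have hR : ∀ l, dist (m l) (x j0) ≤ Real.sqrt (E / w j0) + C := by
    intro l
    have h1 : dist (m l) (xl l j0) ^ 2 ≤ E / w j0 :=
      (le_div_iff₀ (hw j0)).mpr (by linarith [hkey l, mul_comm (w j0) (dist (m l) (xl l j0) ^ 2)])
    have h2 : dist (m l) (xl l j0) ≤ Real.sqrt (E / w j0) :=
      Real.le_sqrt_of_sq_le h1
    calc dist (m l) (x j0) ≤ dist (m l) (xl l j0) + dist (xl l j0) (x j0) :=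
          dist_triangle _ _ _
      _ ≤ Real.sqrt (E / w j0) + C := add_le_add h2 (hC' l j0)
  constructor
  · apply Metric.isBounded_closedBall (x := x j0) (r := Real.sqrt (E / w j0) + C) |>.subset
    rw [Set.range_subset_iff]
    intro l
    exact Metric.mem_closedBall.mpr (hR l)
  · intro m₀ φ hφ hlim v
    have hxφ : Tendsto (xl ∘ φ) atTop (nhds x) := hconv.comp hφ.tendsto_atTop
    have hL : Tendsto (fun l => ∑ j, w j * dist (m (φ l)) (xl (φ l) j) ^ 2) atTop
        (nhds (∑ j, w j * dist m₀ (x j) ^ 2)) := by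
      apply tendsto_finset_sum
      intro j _
      exact (tendsto_const_nhds.mul
        ((hlim.dist (((continuous_apply j).continuousAt.tendsto).comp hxφ)).pow 2))
    have hRt : Tendsto (fun l => ∑ j, w j * dist v (xl (φ l) j) ^ 2) atTop
        (nhds (∑ j, w j * dist v (x j) ^ 2)) := by
      apply tendsto_finset_sum
      intro j _
      exact (tendsto_const_nhds.mul
        ((tendsto_const_nhds.dist (((continuous_apply j).continuousAt.tendsto).comp hxφ)).pow 2))
    exact le_of_tendsto_of_tendsto' hL hRt (fun l => hm (φ l) v)
end

section
/- Let M be a proper metric space, g : M^N → M continuous, k a fixed index, and define d(u) via the minimal detail convention: d(u) = dist(u_k, g(u)). Given x ∈ M^N, f ∈ M^N, p ≥ 1, λ₁ > 0, the ℓ⁰-atom proximal functional u ↦ (1/(2μ)) Σ_i dist(u_i, x_i)² + λ₁·[d(u) ≠ 0] attains its minimum on M^N, and its minimal value is ≤ λ₁ (achieved by testing u = x). -/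
open Classical in
theorem stmt_15 {M : Type*} [MetricSpace M] [ProperSpace M]
    {N : Type*} [Fintype N]
    (g : (N → M) → M) (hg : Continuous g) (k : N)
    (x : N → M) (f : N → M) (p : ℝ) (hp : 1 ≤ p)
    (μ lam₁ : ℝ) (hμ : 0 < μ) (hlam : 0 < lam₁)
    (F : (N → M) → ℝ)
    (hF : ∀ u, F u = (1 / (2 * μ)) * ∑ i, dist (u i) (x i) ^ 2 +
      lam₁ * (if u k = g u then (0 : ℝ) else 1)) :
    ∃ u : N → M, (∀ v : N → M, F u ≤ F v) ∧ F u ≤ lam₁ := by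
  set Q : (N → M) → ℝ := fun u => (1 / (2 * μ)) * ∑ i, dist (u i) (x i) ^ 2 with hQ
  have hQcont : Continuous Q := by
    apply continuous_const.mul
    exact continuous_finset_sum _ fun i _ =>
      (((continuous_apply i).dist continuous_const).pow 2)
  have hμ2 : (0:ℝ) < 1 / (2 * μ) := by positivity
  have hQnonneg : ∀ u, 0 ≤ Q u := by
    intro u
    apply mul_nonneg hμ2.le
    exact Finset.sum_nonneg fun i _ => by positivity
  have hQx : Q x = 0 := by
    simp [hQ]
  have hFQ : ∀ u, Q u ≤ F u := by
    intro u
    rw [hF]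
    have h0 : 0 ≤ lam₁ * (if u k = g u then (0 : ℝ) else 1) := by
      split <;> simp [hlam.le]
    simp only [hQ]
    linarith
  have hFC : ∀ u, u k = g u → F u = Q u := by
    intro u h; rw [hF]; simp [h, hQ]
  have hFnC : ∀ u, u k ≠ g u → F u = Q u + lam₁ := by
    intro u h; rw [hF]; simp [h, hQ]
  set C : Set (N → M) := {u | u k = g u} with hC
  have hCclosed : IsClosed C := isClosed_eq (continuous_apply k) hg
  by_cases hw : ∃ w ∈ C, Q w ≤ lam₁
  · obtain ⟨w, hwC, hwQ⟩ := hw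
    -- compact box
    set R : ℝ := Real.sqrt (2 * μ * lam₁) with hR
    set K : Set (N → M) := Set.pi Set.univ (fun i => Metric.closedBall (x i) R) with hK
    have hKcompact : IsCompact K := isCompact_univ_pi fun i => isCompact_closedBall _ _
    -- any u with Q u ≤ lam₁ is in K
    have hmem : ∀ u, Q u ≤ lam₁ → u ∈ K := by
      intro u hu i _
      have hsum : ∑ i, dist (u i) (x i) ^ 2 ≤ 2 * μ * lam₁ := by
        have := hu
        rw [hQ] at this
        simp only at this
        rw [div_mul_eq_mul_div, one_mul, div_le_iff₀ (by positivity)] at this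
        linarith [this]
      have hle : dist (u i) (x i) ^ 2 ≤ 2 * μ * lam₁ := by
        refine le_trans ?_ hsum
        exact Finset.single_le_sum (f := fun j => dist (u j) (x j) ^ 2)
          (fun j _ => by positivity) (Finset.mem_univ i)
      have : dist (u i) (x i) ≤ R := by
        rw [hR]
        have := Real.sqrt_le_sqrt hle
        rwa [Real.sqrt_sq dist_nonneg] at this
      simpa [Metric.mem_closedBall] using this
    have hwK : w ∈ K := hmem w hwQ
    obtain ⟨u, huCK, humin⟩ :=
      (hKcompact.inter_left hCclosed).exists_isMinOn ⟨w, hwC, hwK⟩ hQcont.continuousOn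
    have huC : u ∈ C := huCK.1
    have huQ : Q u ≤ lam₁ := le_trans (humin ⟨hwC, hwK⟩) hwQ
    refine ⟨u, ?_, by rw [hFC u huC]; exact huQ⟩
    intro v
    rw [hFC u huC]
    by_cases hvC : v ∈ C
    · rw [hFC v hvC]
      by_cases hvK : v ∈ K
      · exact humin ⟨hvC, hvK⟩
      · -- v outside K: Q v > lam₁
        by_contra hcon
        push_neg at hcon
        exact hvK (hmem v (le_trans hcon.le huQ))
    · rw [hFnC v hvC]
      have := hQnonneg v
      linarith
  · push_neg at hw
    refine ⟨x, ?_, ?_⟩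
    · intro v
      have hFx : F x ≤ lam₁ := by
        rw [hF]
        have : (∑ i, dist (x i) (x i) ^ 2) = 0 := by simp
        rw [this]
        split <;> [simp [hlam.le]; simp]
      by_cases hvC : v ∈ C
      · have := hw v hvC
        rw [hFC v hvC]
        linarith
      · rw [hFnC v hvC]
        have := hQnonneg v
        linarith
    · rw [hF]
      have : (∑ i, dist (x i) (x i) ^ 2) = 0 := by simp
      rw [this]
      split <;> [simp [hlam.le]; simp]
end

section
/- Let M be a proper metric space and F : M^N → ℝ be of the form F(u) = D(u) + λ₂ Σ_{n=1}^{N-1} dist(u_{n-1}, u_n)^q + R(u), where D ≥ 0 and R ≥ 0 are lower semicontinuous, λ₂ > 0 and q ≥ 1. Suppose additionally there exists i₀ with D(u) ≥ dist(u_{i₀}, f₀)^p for a fixed f₀ ∈ M and p ≥ 1. Then F is coercive and attains its minimum on M^N. -/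
open Filter Metric Set

-- lsc attains min on nonempty compact set (with nonneg lower bound)
lemma lsc_min_aux {X : Type*} [TopologicalSpace X] [T2Space X] {K : Set X} (hK : IsCompact K)
    (hne : K.Nonempty) {f : X → ℝ} (hf : LowerSemicontinuous f) (hbdd : ∀ x ∈ K, 0 ≤ f x) :
    ∃ x ∈ K, ∀ y ∈ K, f x ≤ f y := by
  set m := sInf (f '' K) with hm
  have hbb : BddBelow (f '' K) := ⟨0, by rintro _ ⟨y, hy, rfl⟩; exact hbdd y hy⟩
  have hmle : ∀ y ∈ K, m ≤ f y := fun y hy => csInf_le hbb ⟨y, hy, rfl⟩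
  set C : ℕ → Set X := fun k => K ∩ {x | f x ≤ m + 1 / (k + 1)} with hC
  have hCne : ∀ k, (C k).Nonempty := by
    intro k
    have hpos : (0 : ℝ) < 1 / (k + 1) := by positivity
    obtain ⟨z, ⟨y, hy, rfl⟩, hz⟩ := exists_lt_of_csInf_lt (hne.image f)
      (lt_add_of_pos_right m hpos)
    exact ⟨y, hy, le_of_lt hz⟩
  have hCcl : ∀ k, IsClosed (C k) := fun k =>
    hK.isClosed.inter (hf.isClosed_preimage _)
  have hCcp : ∀ k, IsCompact (C k) := fun k => hK.inter_right (hf.isClosed_preimage _)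
  have hmono : ∀ a b : ℕ, a ≤ b → C b ⊆ C a := by
    intro a b hab x hx
    obtain ⟨hxK, hxf⟩ := hx
    refine ⟨hxK, ?_⟩
    simp only [mem_setOf_eq] at hxf ⊢
    have h1 : ((a : ℝ) + 1) ≤ (b : ℝ) + 1 := by exact_mod_cast Nat.succ_le_succ hab
    exact le_trans hxf (add_le_add_right (one_div_le_one_div_of_le (by positivity) h1) m)
  have hdir : Directed (· ⊇ ·) C := fun a b =>
    ⟨max a b, hmono a _ (le_max_left a b), hmono b _ (le_max_right a b)⟩
  obtain ⟨x, hx⟩ := IsCompact.nonempty_iInter_of_directed_nonempty_isCompact_isClosed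
    C hdir hCne hCcp hCcl
  simp only [mem_iInter] at hx
  refine ⟨x, (hx 0).1, fun y hy => le_trans ?_ (hmle y hy)⟩
  by_contra h
  push_neg at h
  obtain ⟨k, hk⟩ := exists_nat_one_div_lt (sub_pos.2 h)
  have := (hx k).2
  have : f x ≤ m + 1 / (k + 1) := this
  nlinarith [hk]

theorem stmt_19 {M : Type*} [MetricSpace M] [ProperSpace M]
    {n : ℕ}
    (D R : (Fin (n + 1) → M) → ℝ)
    (hD : LowerSemicontinuous D) (hR : LowerSemicontinuous R)
    (hD0 : ∀ u, 0 ≤ D u) (hR0 : ∀ u, 0 ≤ R u)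
    (lam₂ q : ℝ) (hlam₂ : 0 < lam₂) (hq : 1 ≤ q)
    (i₀ : Fin (n + 1)) (f₀ : M) (p : ℝ) (hp : 1 ≤ p)
    (hanchor : ∀ u, dist (u i₀) f₀ ^ p ≤ D u)
    (F : (Fin (n + 1) → M) → ℝ)
    (hF : ∀ u, F u = D u +
      lam₂ * ∑ i : Fin n, dist (u i.castSucc) (u i.succ) ^ q + R u) :
    (∀ (σ : Fin (n + 1) → M) (u : ℕ → Fin (n + 1) → M),
      Tendsto (fun k => dist (u k) σ) atTop atTop →
      Tendsto (fun k => F (u k)) atTop atTop) ∧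
    (∃ u : Fin (n + 1) → M, ∀ v, F u ≤ F v) := by
  -- auxiliary: x ^ r ≤ B with x ≥ 0, r ≥ 1 implies x ≤ max 1 B
  have aux : ∀ (x B r : ℝ), 0 ≤ x → 1 ≤ r → x ^ r ≤ B → x ≤ max 1 B := by
    intro x B r hx hr hxB
    rcases le_or_gt x 1 with h | h
    · exact le_max_of_le_left h
    · refine le_max_of_le_right (le_trans ?_ hxB)
      calc x = x ^ (1 : ℝ) := (Real.rpow_one x).symm
        _ ≤ x ^ r := Real.rpow_le_rpow_of_exponent_le h.le hr
  -- nonnegativity of F and its pieces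
  have hS0 : ∀ u : Fin (n + 1) → M, 0 ≤ ∑ i : Fin n, dist (u i.castSucc) (u i.succ) ^ q :=
    fun u => Finset.sum_nonneg fun i _ => Real.rpow_nonneg dist_nonneg q
  have hF0 : ∀ u, 0 ≤ F u := by
    intro u
    rw [hF u]
    have := hS0 u
    nlinarith [hD0 u, hR0 u]
  -- the chain bound : dist (u 0) (u i) is at most the sum of consecutive distances
  have chain : ∀ (u : Fin (n + 1) → M) (i : Fin (n + 1)),
      dist (u 0) (u i) ≤ ∑ j : Fin n, dist (u j.castSucc) (u j.succ) := by
    intro u i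
    set g : ℕ → M := fun k => u ⟨min k n, by omega⟩ with hg
    have h0 : g 0 = u 0 := by
      simp only [hg]
      congr 1
    have hi : g i.val = u i := by
      simp only [hg]
      congr 1
      exact Fin.ext (by simp [Nat.min_eq_left (Nat.le_of_lt_succ i.isLt)])
    calc dist (u 0) (u i) = dist (g 0) (g i.val) := by rw [h0, hi]
      _ ≤ ∑ k ∈ Finset.range i.val, dist (g k) (g (k + 1)) := dist_le_range_sum_dist g i.val
      _ ≤ ∑ k ∈ Finset.range n, dist (g k) (g (k + 1)) :=
          Finset.sum_le_sum_of_subset_of_nonneg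
            (Finset.range_subset_range.2 (Nat.le_of_lt_succ i.isLt))
            (fun _ _ _ => dist_nonneg)
      _ = ∑ j : Fin n, dist (u j.castSucc) (u j.succ) := by
          rw [← Fin.sum_univ_eq_sum_range (fun k => dist (g k) (g (k + 1))) n]
          refine Finset.sum_congr rfl fun j _ => ?_
          have h1 : g j.val = u j.castSucc := by
            simp only [hg]
            congr 1
            exact Fin.ext (by simp [Nat.min_eq_left j.isLt.le])
          have h2 : g (j.val + 1) = u j.succ := by
            simp only [hg]
            congr 1
            exact Fin.ext (by simp [Nat.min_eq_left j.isLt])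
          rw [h1, h2]
  -- main sublevel-set bound
  have key : ∀ (B : ℝ) (u : Fin (n + 1) → M), F u ≤ B → ∀ i,
      dist (u i) f₀ ≤ max 1 B + 2 * (n * max 1 (B / lam₂)) := by
    intro B u hu i
    set S := ∑ j : Fin n, dist (u j.castSucc) (u j.succ) ^ q with hSdef
    have hFu := hF u
    have hDB : D u ≤ B := by nlinarith [hS0 u, hR0 u, mul_nonneg hlam₂.le (hS0 u)]
    have hSB : S ≤ B / lam₂ := by
      rw [le_div_iff₀ hlam₂]
      nlinarith [hD0 u, hR0 u]
    have hanch : dist (u i₀) f₀ ≤ max 1 B :=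
      aux _ _ _ dist_nonneg hp (le_trans (hanchor u) hDB)
    have hedge : ∀ j : Fin n, dist (u j.castSucc) (u j.succ) ≤ max 1 (B / lam₂) := by
      intro j
      refine aux _ _ _ dist_nonneg hq (le_trans ?_ hSB)
      exact Finset.single_le_sum (f := fun k : Fin n => dist (u k.castSucc) (u k.succ) ^ q)
        (fun k _ => Real.rpow_nonneg dist_nonneg q) (Finset.mem_univ j)
    have hsum : ∑ j : Fin n, dist (u j.castSucc) (u j.succ) ≤ n * max 1 (B / lam₂) := by
      calc ∑ j : Fin n, dist (u j.castSucc) (u j.succ)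
          ≤ ∑ _j : Fin n, max 1 (B / lam₂) := Finset.sum_le_sum fun j _ => hedge j
        _ = n * max 1 (B / lam₂) := by simp [Finset.sum_const, nsmul_eq_mul]
    have h1 : dist (u i) (u i₀) ≤ 2 * (n * max 1 (B / lam₂)) := by
      have := chain u i
      have := chain u i₀
      have hd : dist (u i) (u i₀) ≤ dist (u 0) (u i) + dist (u 0) (u i₀) := by
        rw [dist_comm (u 0) (u i)]; exact dist_triangle _ _ _
      nlinarith
    calc dist (u i) f₀ ≤ dist (u i) (u i₀) + dist (u i₀) f₀ := dist_triangle _ _ _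
      _ ≤ max 1 B + 2 * (n * max 1 (B / lam₂)) := by linarith
  -- radius function
  set r : ℝ → ℝ := fun B => max 1 B + 2 * (n * max 1 (B / lam₂)) with hr
  have hr0 : ∀ B, 0 ≤ r B := by
    intro B
    have h1 : (1 : ℝ) ≤ max 1 B := le_max_left _ _
    have h2 : (1 : ℝ) ≤ max 1 (B / lam₂) := le_max_left _ _
    have : (0 : ℝ) ≤ (n : ℝ) := Nat.cast_nonneg n
    simp only [hr]
    nlinarith
  -- F is lower semicontinuous
  have hFlsc : LowerSemicontinuous F := by
    have hFeq : F = fun u => D u +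
        lam₂ * ∑ i : Fin n, dist (u i.castSucc) (u i.succ) ^ q + R u := funext hF
    rw [hFeq]
    have hcont : Continuous fun u : Fin (n + 1) → M =>
        lam₂ * ∑ i : Fin n, dist (u i.castSucc) (u i.succ) ^ q := by
      refine continuous_const.mul (continuous_finset_sum _ fun i _ => ?_)
      exact (Real.continuous_rpow_const (le_trans zero_le_one hq)).comp
        (Continuous.dist (continuous_apply _) (continuous_apply _))
    exact (hD.add hcont.lowerSemicontinuous).add hR
  constructor
  · -- coercivity
    intro σ u hu
    rw [Filter.tendsto_atTop]
    intro B
    have hev : ∀ᶠ k in atTop, r B + dist (fun _ => f₀ : Fin (n + 1) → M) σ <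
        dist (u k) σ := (Filter.tendsto_atTop.1 hu _).mono fun k hk => lt_of_lt_of_le
          (lt_add_one _) hk
    filter_upwards [hev] with k hk
    by_contra hFk
    push_neg at hFk
    have hball : ∀ i, dist (u k i) f₀ ≤ r B := key B (u k) hFk.le
    have hd1 : dist (u k) (fun _ => f₀ : Fin (n + 1) → M) ≤ r B :=
      (dist_pi_le_iff (hr0 B)).2 fun i => hball i
    have : dist (u k) σ ≤ r B + dist (fun _ => f₀ : Fin (n + 1) → M) σ :=
      le_trans (dist_triangle _ _ _) (add_le_add_left hd1 _)
    linarith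
  · -- existence of a minimizer
    set u₀ : Fin (n + 1) → M := fun _ => f₀ with hu₀
    set c := F u₀ with hc
    set K : Set (Fin (n + 1) → M) := Set.pi Set.univ fun _ => closedBall f₀ (r c) with hK
    have hKcp : IsCompact K := isCompact_univ_pi fun _ => isCompact_closedBall f₀ (r c)
    have hu₀K : u₀ ∈ K := fun i _ => by
      simp [hu₀, mem_closedBall, hr0 c]
    have hsub : ∀ v, F v ≤ c → v ∈ K := by
      intro v hv i _
      exact key c v hv i
    obtain ⟨w, hwK, hwmin⟩ := lsc_min_aux hKcp ⟨u₀, hu₀K⟩ hFlsc fun x _ => hF0 x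
    refine ⟨w, fun v => ?_⟩
    rcases le_or_gt (F v) c with h | h
    · exact hwmin v (hsub v h)
    · exact le_trans (hwmin u₀ hu₀K) h.le
end
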